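/- Let V be a fluid algebra with operator D, and let X : ℝ → V be a differentiable curve solving the associated Euler equation, i.e. (Ẋ(t), Z) = {X(t), D X(t), Z} for all Z ∈ V and all t ∈ ℝ. Then the energy t ↦ (X(t), X(t)) is constant in t. -/

import Mathlib

/-!
Differentiating the energy gives `2 ⟪Ẋ, X⟫ = 2 {X, D X, X}`, which vanishes because the
triple intersection form is alternating.
-/

open scoped RealInnerProductSpace

theorem inner_self_eq_of_inner_deriv_self_eq_zero {V : Type*} [NormedAddCommGroup V]
    [InnerProductSpace ℝ V] {X X' : ℝ → V} (hX : ∀ t, HasDerivAt X (X' t) t)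
    (horth : ∀ t, ⟪X' t, X t⟫ = 0) (s t : ℝ) : ⟪X s, X s⟫ = ⟪X t, X t⟫ := by
  have hderiv : ∀ u, HasDerivAt (fun u => ⟪X u, X u⟫) 0 u := fun u => by
    simpa [horth u, real_inner_comm (X' u) (X u)] using (hX u).inner ℝ (hX u)
  exact is_const_of_deriv_eq_zero (fun u => (hderiv u).differentiableAt)
    (fun u => (hderiv u).deriv) s t

theorem fluid_algebra_energy_invariant
    {V : Type*} [NormedAddCommGroup V] [InnerProductSpace ℝ V]
    (T : AlternatingMap ℝ V ℝ (Fin 3))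
    (D : V →ₗ[ℝ] V)
    (X X' : ℝ → V)
    (hX : ∀ t : ℝ, HasDerivAt X (X' t) t)
    (hEuler : ∀ t : ℝ, ∀ Z : V, ⟪X' t, Z⟫ = T ![X t, D (X t), Z]) :
    ∀ s t : ℝ, ⟪X s, X s⟫ = ⟪X t, X t⟫ :=
  inner_self_eq_of_inner_deriv_self_eq_zero hX fun t => by
    rw [hEuler t (X t)]
    exact T.map_eq_zero_of_eq _ (i := 0) (j := 2) rfl (by decide)
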